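/- Latent projection commutes: if G is an mDAG with vertex set V ∪ U1 ∪ U2 (disjoint), then p(G, V) = p(p(G, V ∪ U1), V); in particular, the order in which vertices are projected out does not matter. -/

import Mathlib

/-- An mDAG: an acyclic directed graph together with an abstract simplicial complex of
bidirected faces (all faces nonempty, all singletons present, closed under nonempty subsets). -/
structure MDAG (W : Type) where
  Edge : W → W → Prop
  Faces : Set (Set W)
  acyclic : ∀ w, ¬ Relation.TransGen Edge w w
  singleton_mem : ∀ w : W, {w} ∈ Faces
  nonempty_of_mem : ∀ B ∈ Faces, B.Nonempty
  down_closed : ∀ A B : Set W, A ⊆ B → A.Nonempty → B ∈ Faces → A ∈ Faces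

/-- `projEdge Edge U a b`: there is a directed path from `a` to `b` (of length ≥ 1) with all
non-endpoint vertices in `U`.  This is the directed-edge relation of the latent projection
that projects out `U`. -/
def projEdge {W : Type} (Edge : W → W → Prop) (U : Set W) (a b : W) : Prop :=
  ∃ c, Relation.ReflTransGen (fun x y => Edge x y ∧ y ∈ U) a c ∧ Edge c b

/-- `hcc Edge Faces U S`: the vertices of `S` share a hidden common cause with respect to `U`:
there is a bidirected face `B ⊆ U ∪ S` such that every `w ∈ S` is reached from some `b ∈ B`
by a directed path all of whose vertices lie in `U ∪ {w}`. -/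
def hcc {W : Type} (Edge : W → W → Prop) (Faces : Set (Set W)) (U : Set W) (S : Set W) : Prop :=
  ∃ B ∈ Faces, B ⊆ U ∪ S ∧
    ∀ w ∈ S, ∃ b ∈ B, Relation.ReflTransGen (fun x y => Edge x y ∧ x ∈ U) b w

/-!
A directed path whose interior lies in `U₁ ∪ U₂` splits at its interior vertices in `U₁` into
segments with interior in `U₂`, i.e. into edges of `p(G, V ∪ U₁)`; conversely such segments
concatenate. For faces, a face `B` of `G` confounding `S` with respect to `U₁ ∪ U₂` yields the
face of `p(G, V ∪ U₁)` formed by the first vertices outside `U₂` on the paths leaving `B`.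
-/

open Relation Set

section LatentProjection

variable {W : Type} {E : W → W → Prop} {U U₁ U₂ : Set W}

def projFaces (E : W → W → Prop) (F : Set (Set W)) (U : Set W) : Set (Set W) :=
  {S | S ⊆ Uᶜ ∧ S.Nonempty ∧ hcc E F U S}

theorem projEdge_iff_exists_edge_reflTransGen {a b : W} :
    projEdge E U a b ↔ ∃ m, E a m ∧ ReflTransGen (fun x y => E x y ∧ x ∈ U) m b := by
  constructor
  · rintro ⟨c, hac, hcb⟩
    induction hac generalizing b with
    | refl => exact ⟨b, hcb, .refl⟩
    | tail _ hc ih =>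
      obtain ⟨m, ham, hmc⟩ := ih hc.1
      exact ⟨m, ham, hmc.tail ⟨hcb, hc.2⟩⟩
  · rintro ⟨m, ham, hmb⟩
    induction hmb using ReflTransGen.head_induction_on generalizing a with
    | refl => exact ⟨a, .refl, ham⟩
    | head hm _ ih =>
      obtain ⟨c, hmc, hcb⟩ := ih hm.1
      exact ⟨c, .head ⟨ham, hm.2⟩ hmc, hcb⟩

theorem projEdge.mono {a b : W} (hU : U₁ ⊆ U₂) (h : projEdge E U₁ a b) : projEdge E U₂ a b :=
  let ⟨c, hac, hcb⟩ := h
  ⟨c, ReflTransGen.mono (fun _ _ hxy => ⟨hxy.1, hU hxy.2⟩) _ _ hac, hcb⟩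

theorem projEdge.head_reflTransGen {a a' b : W}
    (ha : ReflTransGen (fun x y => E x y ∧ y ∈ U) a a') (h : projEdge E U a' b) :
    projEdge E U a b :=
  let ⟨c, hc, hcb⟩ := h
  ⟨c, ha.trans hc, hcb⟩

theorem projEdge.reflTransGen_of_mem_right {a b : W} (h : projEdge E U a b) (hb : b ∈ U) :
    ReflTransGen (fun x y => E x y ∧ y ∈ U) a b :=
  let ⟨_, hac, hcb⟩ := h
  hac.tail ⟨hcb, hb⟩

theorem projEdge.reflTransGen_of_mem_left {a b : W} (h : projEdge E U a b) (ha : a ∈ U) :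
    ReflTransGen (fun x y => E x y ∧ x ∈ U) a b :=
  let ⟨_, ham, hmb⟩ := projEdge_iff_exists_edge_reflTransGen.mp h
  hmb.head ⟨ham, ha⟩

theorem projEdge_projEdge_of_edge {a a' b : W} (h : E a a') (ha' : a' ∈ U₂)
    (hp : projEdge (projEdge E U₂) U₁ a' b) : projEdge (projEdge E U₂) U₁ a b := by
  have extend {y : W} : projEdge E U₂ a' y → projEdge E U₂ a y :=
    projEdge.head_reflTransGen (.single ⟨h, ha'⟩)
  obtain ⟨d, ha'd, hdb⟩ := hp
  rcases ha'd.cases_head with rfl | ⟨e, ha'e, hed⟩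
  · exact ⟨a, .refl, extend hdb⟩
  · exact ⟨d, .head ⟨extend ha'e.1, ha'e.2⟩ hed, hdb⟩

theorem projEdge_projEdge {a b : W} :
    projEdge (projEdge E U₂) U₁ a b ↔ projEdge E (U₁ ∪ U₂) a b := by
  constructor
  · rintro ⟨d, had, hdb⟩
    refine projEdge.head_reflTransGen ?_ (hdb.mono subset_union_right)
    exact ReflTransGen.lift' id (fun _ _ hxy =>
      (hxy.1.mono subset_union_right).reflTransGen_of_mem_right (Or.inl hxy.2)) _ _ had
  · rintro ⟨c, hac, hcb⟩
    induction hac using ReflTransGen.head_induction_on with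
    | refl => exact ⟨c, .refl, c, .refl, hcb⟩
    | head hx _ ih =>
      rcases hx.2 with h₁ | h₂
      · exact projEdge.head_reflTransGen (.single ⟨⟨_, .refl, hx.1⟩, h₁⟩) ih
      · exact projEdge_projEdge_of_edge hx.1 h₂ ih

/-- Cutting a path at its first vertex `v` outside `U₂`. -/
theorem exists_reflTransGen_projEdge_of_reflTransGen_union {b w : W} (hw : w ∉ U₂)
    (h : ReflTransGen (fun x y => E x y ∧ x ∈ U₁ ∪ U₂) b w) :
    ∃ v ∉ U₂, ReflTransGen (fun x y => E x y ∧ x ∈ U₂) b v ∧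
      ReflTransGen (fun x y => projEdge E U₂ x y ∧ x ∈ U₁) v w := by
  induction h using ReflTransGen.head_induction_on with
  | refl => exact ⟨w, hw, .refl, .refl⟩
  | @head b b' hb _ ih =>
    obtain ⟨v, hv, hb'v, hvw⟩ := ih
    by_cases hb₂ : b ∈ U₂
    · exact ⟨v, hv, .head ⟨hb.1, hb₂⟩ hb'v, hvw⟩
    · refine ⟨b, hb₂, .refl, .head ⟨?_, hb.2.resolve_right hb₂⟩ hvw⟩
      exact projEdge_iff_exists_edge_reflTransGen.mpr ⟨b', hb.1, hb'v⟩

variable {F : Set (Set W)} {S : Set W}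

theorem hcc_of_hcc_projEdge (h : hcc (projEdge E U₂) (projFaces E F U₂) U₁ S) :
    hcc E F (U₁ ∪ U₂) S := by
  obtain ⟨B', ⟨-, -, B, hB, hBB', hBpath⟩, hB'S, hB'path⟩ := h
  refine ⟨B, hB, ?_, fun w hw => ?_⟩
  · calc B ⊆ U₂ ∪ B' := hBB'
      _ ⊆ U₂ ∪ (U₁ ∪ S) := union_subset_union_right _ hB'S
      _ = U₁ ∪ U₂ ∪ S := by rw [← union_assoc, union_comm U₂]
  · obtain ⟨b', hb', hb'w⟩ := hB'path w hw
    obtain ⟨b, hb, hbb'⟩ := hBpath b' hb'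
    refine ⟨b, hb, (ReflTransGen.mono (fun _ _ hxy => ⟨hxy.1, Or.inr hxy.2⟩) _ _ hbb').trans ?_⟩
    exact ReflTransGen.lift' id (fun _ _ hxy =>
      (hxy.1.mono subset_union_right).reflTransGen_of_mem_left (Or.inl hxy.2)) _ _ hb'w

theorem hcc_projEdge_of_hcc (hS : S ⊆ U₂ᶜ) (hSne : S.Nonempty) (h : hcc E F (U₁ ∪ U₂) S) :
    hcc (projEdge E U₂) (projFaces E F U₂) U₁ S := by
  obtain ⟨B, hB, hBsub, hBpath⟩ := h
  set B' := {v ∈ (U₁ ∪ S) \ U₂ | ∃ b ∈ B, ReflTransGen (fun x y => E x y ∧ x ∈ U₂) b v}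
  have hreach : ∀ w ∈ S,
      ∃ v ∈ B', ReflTransGen (fun x y => projEdge E U₂ x y ∧ x ∈ U₁) v w := by
    intro w hw
    obtain ⟨b, hb, hbw⟩ := hBpath w hw
    obtain ⟨v, hv, hbv, hvw⟩ := exists_reflTransGen_projEdge_of_reflTransGen_union (hS hw) hbw
    have hvU₁S : v ∈ U₁ ∪ S := by
      rcases hvw.cases_head with rfl | ⟨_, hv', _⟩
      exacts [Or.inr hw, Or.inl hv'.2]
    exact ⟨v, ⟨⟨hvU₁S, hv⟩, b, hb, hbv⟩, hvw⟩
  have hB'face : B' ∈ projFaces E F U₂ := by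
    refine ⟨fun v hv => hv.1.2, ?_, B, hB, fun b hb => ?_, fun v hv => hv.2⟩
    · obtain ⟨w, hw⟩ := hSne
      obtain ⟨v, hv, -⟩ := hreach w hw
      exact ⟨v, hv⟩
    · by_cases hb₂ : b ∈ U₂
      · exact Or.inl hb₂
      · have hbU₁S : b ∈ U₁ ∪ S := (hBsub hb).imp_left (·.resolve_right hb₂)
        exact Or.inr ⟨⟨hbU₁S, hb₂⟩, b, hb, .refl⟩
  exact ⟨B', hB'face, fun v hv => hv.1.1, hreach⟩

end LatentProjection

theorem stmt12_general {W : Type} (G : MDAG W) (U1 U2 : Set W) :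
    (∀ a b, a ∉ U1 ∪ U2 → b ∉ U1 ∪ U2 →
      (projEdge (projEdge G.Edge U2) U1 a b ↔ projEdge G.Edge (U1 ∪ U2) a b)) ∧
    (∀ S : Set W, S ⊆ (U1 ∪ U2)ᶜ → S.Nonempty →
      (hcc (projEdge G.Edge U2)
          {S' | S' ⊆ U2ᶜ ∧ S'.Nonempty ∧ hcc G.Edge G.Faces U2 S'} U1 S ↔
        hcc G.Edge G.Faces (U1 ∪ U2) S)) := by
  refine ⟨fun _ _ _ _ => projEdge_projEdge, fun S hS hSne => ⟨hcc_of_hcc_projEdge, ?_⟩⟩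
  exact hcc_projEdge_of_hcc (hS.trans (compl_subset_compl.mpr subset_union_right)) hSne

/-- Latent projection commutes: for an mDAG `G` with vertices `V ∪ U₁ ∪ U₂` (disjoint),
projecting out `U₂` first (giving the mDAG `p(G, V ∪ U₁)`, whose edges are `projEdge G.Edge U₂`
and whose faces are the sets sharing a hidden common cause w.r.t. `U₂`) and then `U₁` yields
the same mDAG on `V` as projecting out `U₁ ∪ U₂` at once. -/
theorem stmt12 {W : Type} [Fintype W] (G : MDAG W) (U1 U2 : Set W) (hdisj : Disjoint U1 U2) :
    (∀ a b, a ∉ U1 ∪ U2 → b ∉ U1 ∪ U2 →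
      (projEdge (projEdge G.Edge U2) U1 a b ↔ projEdge G.Edge (U1 ∪ U2) a b)) ∧
    (∀ S : Set W, S ⊆ (U1 ∪ U2)ᶜ → S.Nonempty →
      (hcc (projEdge G.Edge U2)
          {S' | S' ⊆ U2ᶜ ∧ S'.Nonempty ∧ hcc G.Edge G.Faces U2 S'} U1 S ↔
        hcc G.Edge G.Faces (U1 ∪ U2) S)) :=
  stmt12_general G U1 U2
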